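/- For every real number A with 1 < A < √2, the polynomial function f : ℝ² → ℝ given by f(x,y) = (x² + y⁴ − 1)·(x + 2y² − A) has only nondegenerate critical points, and it has exactly eight critical points, of which exactly three are local minima, exactly four are saddles, and exactly one is a local maximum. -/

import Mathlib

/-- A point `p = (x₀, y₀)` is a critical point of `f : ℝ → ℝ → ℝ` if both
partial derivatives of `f` vanish at `p`. -/
def IsCriticalPt (f : ℝ → ℝ → ℝ) (p : ℝ × ℝ) : Prop :=
  deriv (fun t => f t p.2) p.1 = 0 ∧ deriv (fun t => f p.1 t) p.2 = 0

/-- The Hessian determinant `f_xx(p) * f_yy(p) - f_xy(p)^2` of `f` at `p`. -/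
noncomputable def hessDet (f : ℝ → ℝ → ℝ) (p : ℝ × ℝ) : ℝ :=
  deriv (fun x => deriv (fun t => f t p.2) x) p.1 *
      deriv (fun y => deriv (fun t => f p.1 t) y) p.2 -
    (deriv (fun y => deriv (fun t => f t y) p.1) p.2) ^ 2

/-- `p` is a local minimum point of the function `(x, y) ↦ f x y`. -/
def IsLocMin (f : ℝ → ℝ → ℝ) (p : ℝ × ℝ) : Prop :=
  IsLocalMin (fun q : ℝ × ℝ => f q.1 q.2) p

/-- `p` is a local maximum point of the function `(x, y) ↦ f x y`. -/
def IsLocMax (f : ℝ → ℝ → ℝ) (p : ℝ × ℝ) : Prop :=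
  IsLocalMax (fun q : ℝ × ℝ => f q.1 q.2) p

/-- A saddle is a critical point that is neither a local minimum
nor a local maximum. -/
def IsSaddle (f : ℝ → ℝ → ℝ) (p : ℝ × ℝ) : Prop :=
  IsCriticalPt f p ∧ ¬ IsLocMin f p ∧ ¬ IsLocMax f p

/-- Realizing family for `J₁₀¹` with eight critical points and one maximum. -/
noncomputable def f12 (A : ℝ) : ℝ → ℝ → ℝ := fun x y => (x ^ 2 + y ^ 4 - 1) * (x + 2 * y ^ 2 - A)

/-! ### Auxiliary calculus lemmas -/

lemma hasDerivAt_fx (A x y : ℝ) :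
    HasDerivAt (fun t => f12 A t y) (2*x*(x+2*y^2-A) + (x^2+y^4-1)) x := by
  have h1 : HasDerivAt (fun t : ℝ => t^2+y^4-1) (2*x) x := by
    simpa using ((hasDerivAt_pow 2 x).add_const (y^4)).sub_const 1
  have h2 : HasDerivAt (fun t : ℝ => t+2*y^2-A) 1 x :=
    ((hasDerivAt_id x).add_const (2*y^2)).sub_const A
  simpa [f12, Pi.mul_def] using (h1.mul h2).congr_deriv (by ring)

lemma hasDerivAt_fy (A x y : ℝ) :
    HasDerivAt (fun t => f12 A x t) (4*y^3*(x+2*y^2-A) + 4*y*(x^2+y^4-1)) y := by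
  have h1 : HasDerivAt (fun t : ℝ => x^2+t^4-1) (4*y^3) y := by
    simpa using (((hasDerivAt_pow 4 y).const_add (x^2)).sub_const 1)
  have h2 : HasDerivAt (fun t : ℝ => x+2*t^2-A) (2*(2*y)) y := by
    simpa using ((((hasDerivAt_pow 2 y)).const_mul 2).const_add x).sub_const A
  simpa [f12, Pi.mul_def] using (h1.mul h2).congr_deriv (by ring)

lemma deriv_fx (A x y : ℝ) :
    deriv (fun t => f12 A t y) x = 2*x*(x+2*y^2-A) + (x^2+y^4-1) :=
  (hasDerivAt_fx A x y).deriv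

lemma deriv_fy (A x y : ℝ) :
    deriv (fun t => f12 A x t) y = 4*y^3*(x+2*y^2-A) + 4*y*(x^2+y^4-1) :=
  (hasDerivAt_fy A x y).deriv

lemma crit_iff (A x y : ℝ) : IsCriticalPt (f12 A) (x, y) ↔
    (2*x*(x+2*y^2-A) + (x^2+y^4-1) = 0 ∧ y*(y^2*(x+2*y^2-A) + (x^2+y^4-1)) = 0) := by
  unfold IsCriticalPt
  rw [deriv_fx, deriv_fy]
  constructor
  · rintro ⟨h1, h2⟩; exact ⟨h1, by linear_combination h2/4⟩
  · rintro ⟨h1, h2⟩; exact ⟨h1, by linear_combination 4*h2⟩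

lemma hessDet_eq (A x y : ℝ) : hessDet (f12 A) (x, y) =
    (6*x+4*y^2-2*A) * (12*y^2*(x+2*y^2-A)+32*y^4+4*(x^2+y^4-1)) - (8*x*y+4*y^3)^2 := by
  unfold hessDet
  have e1 : (fun x' => deriv (fun t => f12 A t (x, y).2) x')
      = fun x' => 2*x'*(x'+2*y^2-A) + (x'^2+y^4-1) := funext fun x' => deriv_fx A x' y
  have e2 : (fun y' => deriv (fun t => f12 A (x, y).1 t) y')
      = fun y' => 4*y'^3*(x+2*y'^2-A) + 4*y'*(x^2+y'^4-1) := funext fun y' => deriv_fy A x y'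
  have e3 : (fun y' => deriv (fun t => f12 A t y') (x, y).1)
      = fun y' => 2*x*(x+2*y'^2-A) + (x^2+y'^4-1) := funext fun y' => deriv_fx A x y'
  rw [e1, e2, e3]
  have d1 : HasDerivAt (fun x' : ℝ => 2*x'*(x'+2*y^2-A) + (x'^2+y^4-1)) (6*x+4*y^2-2*A) x := by
    have h1 : HasDerivAt (fun x' : ℝ => 2*x') 2 x := by
      simpa using (hasDerivAt_id x).const_mul 2
    have h2 : HasDerivAt (fun x' : ℝ => x'+2*y^2-A) 1 x :=
      ((hasDerivAt_id x).add_const (2*y^2)).sub_const A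
    have h3 : HasDerivAt (fun x' : ℝ => x'^2+y^4-1) (2*x) x := by
      simpa using ((hasDerivAt_pow 2 x).add_const (y^4)).sub_const 1
    simpa [Pi.mul_def, Pi.add_def] using ((h1.mul h2).add h3).congr_deriv (by ring)
  have d2 : HasDerivAt (fun y' : ℝ => 4*y'^3*(x+2*y'^2-A) + 4*y'*(x^2+y'^4-1))
      (12*y^2*(x+2*y^2-A)+32*y^4+4*(x^2+y^4-1)) y := by
    have h1 : HasDerivAt (fun y' : ℝ => 4*y'^3) (4*(3*y^2)) y := by
      simpa using (hasDerivAt_pow 3 y).const_mul 4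
    have h2 : HasDerivAt (fun y' : ℝ => x+2*y'^2-A) (2*(2*y)) y := by
      simpa using (((hasDerivAt_pow 2 y)).const_mul 2).const_add x |>.sub_const A
    have h3 : HasDerivAt (fun y' : ℝ => 4*y') 4 y := by
      simpa using (hasDerivAt_id y).const_mul 4
    have h4 : HasDerivAt (fun y' : ℝ => x^2+y'^4-1) (4*y^3) y := by
      simpa using (((hasDerivAt_pow 4 y)).const_add (x^2)).sub_const 1
    simpa [Pi.mul_def, Pi.add_def] using ((h1.mul h2).add (h3.mul h4)).congr_deriv (by ring)
  have d3 : HasDerivAt (fun y' : ℝ => 2*x*(x+2*y'^2-A) + (x^2+y'^4-1)) (8*x*y+4*y^3) y := by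
    have h2 : HasDerivAt (fun y' : ℝ => x+2*y'^2-A) (2*(2*y)) y := by
      simpa using (((hasDerivAt_pow 2 y)).const_mul 2).const_add x |>.sub_const A
    have h4 : HasDerivAt (fun y' : ℝ => x^2+y'^4-1) (4*y^3) y := by
      simpa using (((hasDerivAt_pow 4 y)).const_add (x^2)).sub_const 1
    simpa [Pi.add_def] using ((h2.const_mul (2*x)).add h4).congr_deriv (by ring)
  rw [d1.deriv, d2.deriv, d3.deriv]

/-! ### Topological helpers -/

lemma not_locMin_of_line (f : ℝ → ℝ → ℝ) (x y a b : ℝ)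
    (h : ∀ᶠ s in nhds (0:ℝ), s ≠ 0 → f (x + a*s) (y + b*s) < f x y) :
    ¬ IsLocMin f (x, y) := by
  intro hm
  have hφ : Filter.Tendsto (fun s : ℝ => ((x + a*s, y + b*s) : ℝ × ℝ)) (nhds 0)
      (nhds (x, y)) := by
    have : Continuous (fun s : ℝ => ((x + a*s, y + b*s) : ℝ × ℝ)) := by fun_prop
    simpa using this.tendsto 0
  have hev : ∀ᶠ s in nhds (0:ℝ), f x y ≤ f (x + a*s) (y + b*s) := hφ.eventually hm
  have h2 : ∀ᶠ s in nhdsWithin (0:ℝ) {0}ᶜ,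
      f x y ≤ f (x + a*s) (y + b*s) ∧ (s ≠ 0 → f (x + a*s) (y + b*s) < f x y) :=
    (hev.and h).filter_mono nhdsWithin_le_nhds
  obtain ⟨s, hs1, hs0⟩ := (h2.and self_mem_nhdsWithin).exists
  exact absurd (hs1.2 hs0) (not_lt.2 hs1.1)

lemma not_locMax_of_line (f : ℝ → ℝ → ℝ) (x y a b : ℝ)
    (h : ∀ᶠ s in nhds (0:ℝ), s ≠ 0 → f x y < f (x + a*s) (y + b*s)) :
    ¬ IsLocMax f (x, y) := by
  intro hm
  have hφ : Filter.Tendsto (fun s : ℝ => ((x + a*s, y + b*s) : ℝ × ℝ)) (nhds 0)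
      (nhds (x, y)) := by
    have : Continuous (fun s : ℝ => ((x + a*s, y + b*s) : ℝ × ℝ)) := by fun_prop
    simpa using this.tendsto 0
  have hev : ∀ᶠ s in nhds (0:ℝ), f (x + a*s) (y + b*s) ≤ f x y := hφ.eventually hm
  have h2 : ∀ᶠ s in nhdsWithin (0:ℝ) {0}ᶜ,
      f (x + a*s) (y + b*s) ≤ f x y ∧ (s ≠ 0 → f x y < f (x + a*s) (y + b*s)) :=
    (hev.and h).filter_mono nhdsWithin_le_nhds
  obtain ⟨s, hs1, hs0⟩ := (h2.and self_mem_nhdsWithin).exists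
  exact absurd (hs1.2 hs0) (not_lt.2 hs1.1)

lemma eventually_small (δ : ℝ) (hδ : 0 < δ) (P : ℝ → Prop)
    (h : ∀ s : ℝ, |s| < δ → P s) : ∀ᶠ s in nhds (0:ℝ), P s := by
  have : Set.Ioo (-δ) δ ∈ nhds (0:ℝ) := Ioo_mem_nhds (by linarith) hδ
  exact Filter.eventually_of_mem this (fun s hs => h s (abs_lt.2 ⟨hs.1, hs.2⟩))

lemma crit_of_locMin {f : ℝ → ℝ → ℝ} {p : ℝ × ℝ} (h : IsLocMin f p) : IsCriticalPt f p := by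
  constructor
  · have hι : Filter.Tendsto (fun t : ℝ => ((t, p.2) : ℝ × ℝ)) (nhds p.1) (nhds p) := by
      have : Continuous (fun t : ℝ => ((t, p.2) : ℝ × ℝ)) := by fun_prop
      simpa using this.tendsto p.1
    exact IsLocalMin.deriv_eq_zero (hι.eventually h)
  · have hι : Filter.Tendsto (fun t : ℝ => ((p.1, t) : ℝ × ℝ)) (nhds p.2) (nhds p) := by
      have : Continuous (fun t : ℝ => ((p.1, t) : ℝ × ℝ)) := by fun_prop
      simpa using this.tendsto p.2
    exact IsLocalMin.deriv_eq_zero (hι.eventually h)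

lemma crit_of_locMax {f : ℝ → ℝ → ℝ} {p : ℝ × ℝ} (h : IsLocMax f p) : IsCriticalPt f p := by
  constructor
  · have hι : Filter.Tendsto (fun t : ℝ => ((t, p.2) : ℝ × ℝ)) (nhds p.1) (nhds p) := by
      have : Continuous (fun t : ℝ => ((t, p.2) : ℝ × ℝ)) := by fun_prop
      simpa using this.tendsto p.1
    exact IsLocalMax.deriv_eq_zero (hι.eventually h)
  · have hι : Filter.Tendsto (fun t : ℝ => ((p.1, t) : ℝ × ℝ)) (nhds p.2) (nhds p) := by
      have : Continuous (fun t : ℝ => ((p.1, t) : ℝ × ℝ)) := by fun_prop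
      simpa using this.tendsto p.2
    exact IsLocalMax.deriv_eq_zero (hι.eventually h)

lemma locMin_of_minOn {f : ℝ → ℝ → ℝ} {p : ℝ × ℝ} {W : Set (ℝ × ℝ)} (hW : IsOpen W)
    (hp : p ∈ W) (h : ∀ q ∈ W, f p.1 p.2 ≤ f q.1 q.2) : IsLocMin f p :=
  Filter.eventually_of_mem (hW.mem_nhds hp) (fun q hq => h q hq)

lemma locMax_of_maxOn {f : ℝ → ℝ → ℝ} {p : ℝ × ℝ} {W : Set (ℝ × ℝ)} (hW : IsOpen W)
    (hp : p ∈ W) (h : ∀ q ∈ W, f q.1 q.2 ≤ f p.1 p.2) : IsLocMax f p :=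
  Filter.eventually_of_mem (hW.mem_nhds hp) (fun q hq => h q hq)

lemma cont_f12 (A : ℝ) : Continuous (fun q : ℝ × ℝ => f12 A q.1 q.2) := by
  unfold f12; fun_prop

/-! ### Exact expansions -/

lemma horiz_line (A x0 y0 x : ℝ) (hg : x0^2 + y0^4 - 1 = 0) (hh : x0 + 2*y0^2 - A = 0) :
    f12 A x y0 = (x - x0)^2 * (x + x0) := by
  simp only [f12]
  linear_combination (x + 2*y0^2 - A) * hg + (x^2 - x0^2) * hh

lemma vert_line (A x0 y0 y : ℝ) (hg : x0^2 + y0^4 - 1 = 0) (hh : x0 + 2*y0^2 - A = 0) :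
    f12 A x0 y = 2*(y^2 - y0^2)^2 * (y^2 + y0^2) := by
  simp only [f12]
  linear_combination (x0 + 2*y^2 - A) * hg + (y^4 - y0^4) * hh

lemma diag_line (A x0 y0 a b u : ℝ) (hg : x0^2 + y0^4 - 1 = 0) (hh : x0 + 2*y0^2 - A = 0) :
    f12 A (x0 + a*u) (y0 + b*u) =
      u^2 * ((2*x0*a + 4*y0^3*b + (a^2 + 6*y0^2*b^2)*u + 4*y0*b^3*u^2 + b^4*u^3)
        * ((a + 4*y0*b) + 2*b^2*u)) := by
  simp only [f12]
  linear_combination ((x0 + a*u) + 2*(y0+b*u)^2 - A) * hg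
    + (u*(2*x0*a + 4*y0^3*b + (a^2 + 6*y0^2*b^2)*u + 4*y0*b^3*u^2 + b^4*u^3)) * hh

lemma axis_cubic (A x0 x : ℝ) (h : 3*x0^2 - 2*A*x0 - 1 = 0) :
    f12 A x 0 = (x0^2 - 1)*(x0 - A) + (x - x0)^2 * (x + 2*x0 - A) := by
  simp only [f12]
  linear_combination (x - x0) * h

lemma p3_cubic (A x0 y0 x : ℝ) (hy : y0^2 = 2*x0) (h : 15*x0^2 - 2*A*x0 - 1 = 0) :
    f12 A x y0 = (x0^2 + 4*x0^2 - 1)*(x0 + 4*x0 - A) + (x - x0)^2 * (x + 6*x0 - A) := by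
  simp only [f12]
  have hy4 : y0^4 = 4*x0^2 := by linear_combination (y0^2 + 2*x0)*hy
  rw [show x^2 + y0^4 - 1 = x^2 + 4*x0^2 - 1 by rw [hy4],
    show x + 2*y0^2 - A = x + 4*x0 - A by rw [hy]; ring]
  linear_combination (x - x0) * h

/-! ### Small arithmetic helpers (kept top-level so that `nlinarith` sees few hypotheses) -/

lemma aux_sqlt {a b : ℝ} (hb : 0 ≤ b) (h : a^2 < b^2) (ha : 0 ≤ a) : a < b := by nlinarith

lemma aux_sq2 {A : ℝ} (h1 : 0 < A) (h : A < Real.sqrt 2) : A^2 < 2 := by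
  nlinarith [Real.sq_sqrt (show (0:ℝ) ≤ 2 by norm_num), Real.sqrt_nonneg 2]

lemma aux_sq_gt1 {A : ℝ} (h : 1 < A) : 1 < A^2 := by nlinarith

lemma aux_one_lt_sq {x : ℝ} (h : 1 < x) : 0 < x^2 - 1 := by nlinarith

lemma aux_g1 {A x : ℝ} (e : 3*x^2-2*A*x-1 = 0) (hx : x < 0) (hA : 0 < A) : x^2 - 1 < 0 := by
  nlinarith [mul_pos hA (neg_pos.2 hx)]

lemma sq_pos_of_ne {a : ℝ} (h : a ≠ 0) : 0 < a^2 := by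
  rcases h.lt_or_gt with h|h <;> nlinarith

lemma val_axis (A x : ℝ) : f12 A x 0 = (x^2-1)*(x-A) := by simp only [f12]; ring

lemma val_p3 (A x y0 : ℝ) (h0 : y0^2 = 2*x) : f12 A x y0 = (5*x^2-1)*(5*x-A) := by
  simp only [f12]; linear_combination ((y0^2+2*x)*(x+2*y0^2-A) + 2*(5*x^2-1))*h0

lemma val_zero (A x y0 : ℝ) (hg : x^2+y0^4-1 = 0) : f12 A x y0 = 0 := by
  simp only [f12]; linear_combination (x+2*y0^2-A)*hg

lemma notmin_axis1 (A x0 r : ℝ) (e : 3*x0^2-2*A*x0-1 = 0) (h3 : 3*x0 = A - r) (hr : 0 < r) :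
    ¬ IsLocMin (f12 A) (x0, 0) := by
  refine not_locMin_of_line _ _ _ 1 0 (eventually_small r hr _ ?_)
  intro u hu hne
  have e0 : (0:ℝ) + 0*u = 0 := by ring
  rw [e0, axis_cubic A x0 (x0+1*u) e, axis_cubic A x0 x0 e]
  have h1 : 0 < u^2 := sq_pos_of_ne hne
  have h2 : x0 + 1*u + 2*x0 - A < 0 := by have := abs_lt.1 hu; linarith
  nlinarith [mul_pos h1 (neg_pos.2 h2)]

lemma notmax_axis2 (A x0 r : ℝ) (e : 3*x0^2-2*A*x0-1 = 0) (h3 : 3*x0 = A + r) (hr : 0 < r) :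
    ¬ IsLocMax (f12 A) (x0, 0) := by
  refine not_locMax_of_line _ _ _ 1 0 (eventually_small r hr _ ?_)
  intro u hu hne
  have e0 : (0:ℝ) + 0*u = 0 := by ring
  rw [e0, axis_cubic A x0 (x0+1*u) e, axis_cubic A x0 x0 e]
  have h1 : 0 < u^2 := sq_pos_of_ne hne
  have h2 : 0 < x0 + 1*u + 2*x0 - A := by have := abs_lt.1 hu; linarith
  nlinarith [mul_pos h1 h2]

lemma notmax_p3 (A x0 y0 : ℝ) (hy : y0^2 = 2*x0) (e : 15*x0^2-2*A*x0-1 = 0)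
    (hδ : 0 < 7*x0-A) : ¬ IsLocMax (f12 A) (x0, y0) := by
  refine not_locMax_of_line _ _ _ 1 0 (eventually_small (7*x0-A) hδ _ ?_)
  intro u hu hne
  have e0 : y0 + 0*u = y0 := by ring
  rw [e0, p3_cubic A x0 y0 (x0+1*u) hy e, p3_cubic A x0 y0 x0 hy e]
  have h1 : 0 < u^2 := sq_pos_of_ne hne
  have h2 : 0 < x0 + 1*u + 6*x0 - A := by have := abs_lt.1 hu; linarith
  nlinarith [mul_pos h1 h2]

lemma notmax_vert (A x0 y0 : ℝ) (hg : x0^2+y0^4-1 = 0) (hh : x0+2*y0^2-A = 0) (hy0 : y0 ≠ 0) :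
    ¬ IsLocMax (f12 A) (x0, y0) := by
  have hy2 : 0 < y0^2 := sq_pos_of_ne hy0
  have habs : 0 < |y0| := abs_pos.2 hy0
  refine not_locMax_of_line _ _ _ 0 1 (eventually_small |y0| habs _ ?_)
  intro u hu hne
  have e0 : x0 + 0*u = x0 := by ring
  rw [e0, vert_line A x0 y0 (y0+1*u) hg hh, vert_line A x0 y0 y0 hg hh]
  have h2 : (y0+1*u)^2 - y0^2 ≠ 0 := by
    intro h
    have h' : u*(2*y0+u) = 0 := by linear_combination h
    rcases mul_eq_zero.1 h' with h''|h''
    · exact hne h''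
    · have hb := abs_lt.1 hu
      rcases hy0.lt_or_gt with hy|hy
      · rw [abs_of_neg hy] at hb; linarith
      · rw [abs_of_pos hy] at hb; linarith
  have h3 : 0 < ((y0+1*u)^2 - y0^2)^2 := sq_pos_of_ne h2
  have h4 : 0 < (y0+1*u)^2 + y0^2 := by nlinarith [sq_nonneg (y0+1*u)]
  nlinarith [mul_pos h3 h4]

lemma notmin_horiz (A x0 y0 : ℝ) (hg : x0^2+y0^4-1 = 0) (hh : x0+2*y0^2-A = 0) (hx0 : x0 < 0) :
    ¬ IsLocMin (f12 A) (x0, y0) := by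
  refine not_locMin_of_line _ _ _ 1 0 (eventually_small (-2*x0) (by linarith) _ ?_)
  intro u hu hne
  have e0 : y0 + 0*u = y0 := by ring
  rw [e0, horiz_line A x0 y0 (x0+1*u) hg hh, horiz_line A x0 y0 x0 hg hh]
  have h1 : 0 < u^2 := sq_pos_of_ne hne
  have h2 : x0 + 1*u + x0 < 0 := by have := abs_lt.1 hu; linarith
  nlinarith [mul_pos h1 (neg_pos.2 h2)]

lemma notmin_diag (A x0 y0 u0 s : ℝ) (h0 : y0^2 = u0) (hg : x0^2+y0^4-1 = 0)
    (hh : x0+2*u0-A = 0) (h2x : 2*x0-u0 = s) (hs : 0 < s) (hx0 : 0 < x0) (hu : 0 < u0) :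
    ¬ IsLocMin (f12 A) (x0, y0) := by
  have hh' : x0+2*y0^2-A = 0 := by linear_combination hh + 2*h0
  set a := y0*s - 4*y0*x0 with ha
  set P : ℝ → ℝ := fun u =>
      (2*x0*a + 4*y0^3*x0 + (a^2+6*y0^2*x0^2)*u + 4*y0*x0^3*u^2 + x0^4*u^3)
      * ((a + 4*y0*x0) + 2*x0^2*u) with hP
  have hcont : Continuous P := by fun_prop
  have hP0 : P 0 < 0 := by
    have hval : P 0 = -2*x0*u0*s^2 := by
      simp only [hP, ha]
      ring_nf
      linear_combination (4*s*x0*u0 - 8*s*x0^2 + 2*s^2*x0 + 4*y0^2*s*x0) * h0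
        + (-4*s*x0*u0) * h2x
    rw [hval]
    nlinarith [mul_pos (mul_pos hx0 hu) (mul_pos hs hs)]
  have hev : ∀ᶠ u in nhds (0:ℝ), P u < 0 := (hcont.tendsto 0) (Iio_mem_nhds hP0)
  refine not_locMin_of_line _ _ _ a x0 ?_
  filter_upwards [hev] with u hPu hne
  rw [diag_line A x0 y0 a x0 u hg hh', val_zero A x0 y0 hg]
  have h1 : 0 < u^2 := sq_pos_of_ne hne
  have := mul_neg_of_pos_of_neg h1 hPu
  simpa [hP] using this

lemma hess_axis (A x : ℝ) (e : 3*x^2-2*A*x-1 = 0) (hg : x^2-1 ≠ 0) :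
    hessDet (f12 A) (x, 0) ≠ 0 := by
  rw [hessDet_eq]
  have h1 : (6*x-2*A)^2 = 4*A^2+12 := by linear_combination 12*e
  have h2 : 6*x-2*A ≠ 0 := by intro h; rw [h] at h1; nlinarith [sq_nonneg A]
  have h3 : (6*x+4*(0:ℝ)^2-2*A) * (12*0^2*(x+2*0^2-A)+32*0^4+4*(x^2+0^4-1)) - (8*x*0+4*0^3)^2
      = (6*x-2*A)*(4*(x^2-1)) := by ring
  rw [h3]
  exact mul_ne_zero h2 (by intro h; apply hg; linarith)

lemma hess_p3 (A x y0 : ℝ) (h0 : y0^2 = 2*x) (e : 15*x^2-2*A*x-1 = 0)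
    (hg : 5*x^2-1 < 0) (hx : 0 < x) : hessDet (f12 A) (x, y0) ≠ 0 := by
  rw [hessDet_eq]
  have key : (6*x+4*y0^2-2*A) * (12*y0^2*(x+2*y0^2-A)+32*y0^4+4*(x^2+y0^4-1)) - (8*x*y0+4*y0^3)^2
      = (14*x-2*A)*(268*x^2-24*A*x-4) - 512*x^3 := by
    linear_combination (-16 + 224*y0^4 + 792*x*y0^2 + 1608*x^2 - 168*A*y0^2 - 432*A*x + 24*A^2) * h0
  rw [key]
  have hkey2 : x*((14*x-2*A)*(268*x^2-24*A*x-4) - 512*x^3) = -8*(5*x^2-1)*(15*x^2+1) := by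
    linear_combination (8 + 256*x^2 - 24*A*x) * e
  have hpos : 0 < x*((14*x-2*A)*(268*x^2-24*A*x-4) - 512*x^3) := by
    rw [hkey2]; nlinarith [sq_nonneg x]
  intro h
  rw [h, mul_zero] at hpos
  exact lt_irrefl 0 hpos

lemma hess_p45 (A x u s y0 : ℝ) (h0 : y0^2 = u) (hh : x+2*u-A = 0) (hg : x^2+u^2-1 = 0)
    (hsq : 2*x-u = s ∨ 2*x-u = -s) (hu : 0 < u) (hs : 0 < s) :
    hessDet (f12 A) (x, y0) ≠ 0 := by
  rw [hessDet_eq]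
  have key : (6*x+4*y0^2-2*A) * (12*y0^2*(x+2*y0^2-A)+32*y0^4+4*(x^2+y0^4-1)) - (8*x*y0+4*y0^3)^2
      = -16*u*(2*x-u)^2 := by
    linear_combination
      (-16 + 224*y0^4 + 224*u*y0^2 + 224*u^2 + 344*x*y0^2 + 344*x*u + 24*x^2
        - 168*A*y0^2 - 168*A*u - 96*A*x + 24*A^2) * h0
      + (-8 + 120*u^2 + 72*x*u + 8*x^2 - 24*A*u) * hh + (16*x) * hg
  rw [key]
  have h2 : (2*x-u)^2 = s^2 := by rcases hsq with h|h <;> rw [h] <;> ring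
  rw [h2]
  have : -16*u*s^2 < 0 := by nlinarith [mul_pos hu (mul_pos hs hs)]
  exact ne_of_lt this

lemma aux_quart {x y : ℝ} (h : x^2+y^4-1 ≤ 0) :
    -1 ≤ x ∧ x ≤ 1 ∧ -1 ≤ y ∧ y ≤ 1 := by
  have hy2 : y^2 ≤ 1 := by nlinarith [sq_nonneg x, sq_nonneg (y^2-1)]
  refine ⟨by nlinarith [sq_nonneg (y^2)], by nlinarith [sq_nonneg (y^2)],
    by nlinarith [sq_nonneg (y+1)], by nlinarith [sq_nonneg (y-1)]⟩

lemma aux_par_bound {A y : ℝ} (hA : A^2 < 2) (hA0 : 0 < A) (h : 2*y^2 ≤ A) :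
    -1 ≤ y ∧ y ≤ 1 := by
  have hA2 : A < 2 := by nlinarith
  have hy2 : y^2 ≤ 1 := by linarith
  exact ⟨by nlinarith [sq_nonneg (y+1)], by nlinarith [sq_nonneg (y-1)]⟩

lemma aux_x0_contra {A y : ℝ} (hA2 : A^2 < 2) (hA0 : 0 < A)
    (h1 : 0 ≤ (0:ℝ)^2 + y^4 - 1) (h2 : (0:ℝ) + 2*y^2 - A ≤ 0) : False := by
  nlinarith [sq_nonneg y, mul_nonneg (by linarith : (0:ℝ) ≤ A/2 - y^2)
    (by nlinarith [sq_nonneg y] : (0:ℝ) ≤ A/2 + y^2)]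

set_option maxHeartbeats 1000000 in
/-- For every `1 < A < √2`, the polynomial `(x² + y⁴ − 1)(x + 2y² − A)` has only
nondegenerate critical points: exactly eight of them, of which exactly three are local
minima, exactly four are saddles, and exactly one is a local maximum. -/
theorem morse_data_f12 (A : ℝ) (hA1 : 1 < A) (hA2 : A < Real.sqrt 2) :
    (∀ p : ℝ × ℝ, IsCriticalPt (f12 A) p → hessDet (f12 A) p ≠ 0) ∧
    {p : ℝ × ℝ | IsCriticalPt (f12 A) p}.Finite ∧
    {p : ℝ × ℝ | IsCriticalPt (f12 A) p}.ncard = 8 ∧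
    {p : ℝ × ℝ | IsCriticalPt (f12 A) p ∧ IsLocMin (f12 A) p}.ncard = 3 ∧
    {p : ℝ × ℝ | IsSaddle (f12 A) p}.ncard = 4 ∧
    {p : ℝ × ℝ | IsCriticalPt (f12 A) p ∧ IsLocMax (f12 A) p}.ncard = 1 := by
  -- ### basic bounds
  have hA0 : (0:ℝ) < A := by linarith
  have hA2' : A^2 < 2 := aux_sq2 hA0 hA2
  have hA1sq : 1 < A^2 := aux_sq_gt1 hA1
  -- ### radicals
  obtain ⟨r, hrd⟩ : ∃ v, v = Real.sqrt (A^2+3) := ⟨_, rfl⟩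
  have hr2 : r^2 = A^2+3 := by rw [hrd]; exact Real.sq_sqrt (by positivity)
  have hr0 : 0 < r := by rw [hrd]; exact Real.sqrt_pos.2 (by positivity)
  have hrA : A < r := aux_sqlt hr0.le (by linarith [hr2]) hA0.le
  have hr2A : r < 2*A := aux_sqlt (by linarith) (by linarith [hr2]) hr0.le
  have hr2' : 2 < r := aux_sqlt hr0.le (by linarith [hr2]) (by norm_num)
  obtain ⟨t, htd⟩ : ∃ v, v = Real.sqrt (A^2+15) := ⟨_, rfl⟩
  have ht2 : t^2 = A^2+15 := by rw [htd]; exact Real.sq_sqrt (by positivity)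
  have ht0 : 0 < t := by rw [htd]; exact Real.sqrt_pos.2 (by positivity)
  have ht2A : 2*A < t := aux_sqlt ht0.le (by linarith [ht2]) (by linarith)
  have ht5 : t < 5 := aux_sqlt (by norm_num) (by linarith [ht2]) ht0.le
  obtain ⟨s, hsd⟩ : ∃ v, v = Real.sqrt (5-A^2) := ⟨_, rfl⟩
  have hs2 : s^2 = 5-A^2 := by rw [hsd]; exact Real.sq_sqrt (by linarith [hA2'])
  have hs0 : 0 < s := by rw [hsd]; exact Real.sqrt_pos.2 (by linarith [hA2'])
  have hs2A : s < 2*A := aux_sqlt (by linarith) (by linarith [hs2]) hs0.le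
  have hA2s : A < 2*s := aux_sqlt (by linarith) (by linarith [hs2]) hA0.le
  -- ### coordinates
  obtain ⟨x1, hx1⟩ : ∃ v, v = (A - r)/3 := ⟨_, rfl⟩
  obtain ⟨x2, hx2⟩ : ∃ v, v = (A + r)/3 := ⟨_, rfl⟩
  obtain ⟨x3, hx3⟩ : ∃ v, v = (A + t)/15 := ⟨_, rfl⟩
  obtain ⟨u4, hu4⟩ : ∃ v, v = (2*A - s)/5 := ⟨_, rfl⟩
  obtain ⟨u5, hu5⟩ : ∃ v, v = (2*A + s)/5 := ⟨_, rfl⟩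
  obtain ⟨x4, hx4⟩ : ∃ v, v = A - 2*u4 := ⟨_, rfl⟩
  obtain ⟨x5, hx5⟩ : ∃ v, v = A - 2*u5 := ⟨_, rfl⟩
  have hx3pos : 0 < x3 := by rw [hx3]; linarith
  have hu4pos : 0 < u4 := by rw [hu4]; linarith
  have hu5pos : 0 < u5 := by rw [hu5]; linarith
  have hx4pos : 0 < x4 := by rw [hx4, hu4]; linarith
  have hx5neg : x5 < 0 := by rw [hx5, hu5]; linarith
  obtain ⟨y3, hy3⟩ : ∃ v, v = Real.sqrt (2*x3) := ⟨_, rfl⟩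
  have hy3sq : y3^2 = 2*x3 := by rw [hy3]; exact Real.sq_sqrt (by linarith)
  have hy3pos : 0 < y3 := by rw [hy3]; exact Real.sqrt_pos.2 (by linarith)
  obtain ⟨y4, hy4⟩ : ∃ v, v = Real.sqrt u4 := ⟨_, rfl⟩
  have hy4sq : y4^2 = u4 := by rw [hy4]; exact Real.sq_sqrt (by linarith)
  have hy4pos : 0 < y4 := by rw [hy4]; exact Real.sqrt_pos.2 hu4pos
  obtain ⟨y5, hy5⟩ : ∃ v, v = Real.sqrt u5 := ⟨_, rfl⟩
  have hy5sq : y5^2 = u5 := by rw [hy5]; exact Real.sq_sqrt (by linarith)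
  have hy5pos : 0 < y5 := by rw [hy5]; exact Real.sqrt_pos.2 hu5pos
  -- ### algebraic identities
  have e1 : 3*x1^2 - 2*A*x1 - 1 = 0 := by rw [hx1]; linear_combination hr2/3
  have e2 : 3*x2^2 - 2*A*x2 - 1 = 0 := by rw [hx2]; linear_combination hr2/3
  have e3 : 15*x3^2 - 2*A*x3 - 1 = 0 := by rw [hx3]; linear_combination ht2/15
  have g4 : x4^2 + u4^2 - 1 = 0 := by rw [hx4, hu4]; linear_combination hs2/5
  have g5 : x5^2 + u5^2 - 1 = 0 := by rw [hx5, hu5]; linear_combination hs2/5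
  have hh4 : x4 + 2*u4 - A = 0 := by rw [hx4]; ring
  have hh5 : x5 + 2*u5 - A = 0 := by rw [hx5]; ring
  have h2x4 : 2*x4 - u4 = s := by rw [hx4, hu4]; ring
  have h2x5 : 2*x5 - u5 = -s := by rw [hx5, hu5]; ring
  -- sign facts
  have hx1neg : x1 < 0 := by rw [hx1]; linarith
  have hx2pos : 1 < x2 := by rw [hx2]; linarith
  have hg1 : x1^2 - 1 < 0 := aux_g1 e1 hx1neg hA0
  have hh1 : x1 - A < 0 := by linarith
  have hg2 : 0 < x2^2 - 1 := aux_one_lt_sq hx2pos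
  have hh2 : x2 - A < 0 := by rw [hx2]; linarith
  have hA32 : A < 3/2 := aux_sqlt (by norm_num) (by linarith [hA2']) hA0.le
  have hAt : A*t < (3/2)*5 := mul_lt_mul'' hA32 ht5 hA0.le ht0.le
  have hx3mul : 15*(A*x3) = A^2 + A*t := by rw [hx3]; ring
  have hAx3 : A*x3 < 1 := by linarith [hx3mul, hA2', hAt]
  have hg3 : 5*x3^2 - 1 < 0 := by linarith [e3, hAx3]
  have hh3 : 0 < 5*x3 - A := by rw [hx3]; linarith
  have h7x3 : 0 < 7*x3 - A := by rw [hx3]; linarith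
  -- derived curve facts at points
  have hg4' : ∀ y0 : ℝ, y0^2 = u4 → x4^2 + y0^4 - 1 = 0 := fun y0 h0 => by
    linear_combination g4 + (y0^2 + u4) * h0
  have hh4' : ∀ y0 : ℝ, y0^2 = u4 → x4 + 2*y0^2 - A = 0 := fun y0 h0 => by
    linear_combination hh4 + 2*h0
  have hg5' : ∀ y0 : ℝ, y0^2 = u5 → x5^2 + y0^4 - 1 = 0 := fun y0 h0 => by
    linear_combination g5 + (y0^2 + u5) * h0
  have hh5' : ∀ y0 : ℝ, y0^2 = u5 → x5 + 2*y0^2 - A = 0 := fun y0 h0 => by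
    linear_combination hh5 + 2*h0
  have hg3' : ∀ y0 : ℝ, y0^2 = 2*x3 → x3^2 + y0^4 - 1 = 5*x3^2 - 1 := fun y0 h0 => by
    linear_combination (y0^2 + 2*x3) * h0
  -- ### the critical set
  have hcrit : ∀ q : ℝ × ℝ, IsCriticalPt (f12 A) q ↔
      (q = (x1,0) ∨ q = (x2,0) ∨ q = (x3,y3) ∨ q = (x3,-y3) ∨ q = (x4,y4) ∨ q = (x4,-y4) ∨
        q = (x5,y5) ∨ q = (x5,-y5)) := by
    rintro ⟨x,y⟩
    rw [crit_iff]
    constructor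
    · rintro ⟨hfx, hfy⟩
      rcases mul_eq_zero.1 hfy with hy0 | hE
      · subst hy0
        have hq : (3*x-(A-r))*(3*x-(A+r)) = 0 := by linear_combination 3*hfx - hr2
        rcases mul_eq_zero.1 hq with h | h
        · exact Or.inl (by rw [Prod.mk.injEq]; exact ⟨by rw [hx1]; linarith, rfl⟩)
        · exact Or.inr (Or.inl (by rw [Prod.mk.injEq]; exact ⟨by rw [hx2]; linarith, rfl⟩))
      · have hkey : (y^2 - 2*x)*(x+2*y^2-A) = 0 := by linear_combination hE - hfx
        rcases mul_eq_zero.1 hkey with hk | hh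
        · have hk' : y^2 = 2*x := by linarith
          have hx0 : 0 ≤ x := by linarith [sq_nonneg y, hk']
          rcases hx0.lt_or_eq with hxpos | hxz
          · have he3x : 15*x^2 - 2*A*x - 1 = 0 := by
              linear_combination hfx - (6*x+y^2)*(by linarith : y^2 - 2*x = (0:ℝ))
            have hq : (15*x-(A-t))*(15*x-(A+t)) = 0 := by linear_combination 15*he3x - ht2
            rcases mul_eq_zero.1 hq with h | h
            · exfalso; linarith
            · have hxx3 : x = x3 := by rw [hx3]; linarith
              subst hxx3
              have : (y-y3)*(y+y3) = 0 := by linear_combination hk' - hy3sq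
              rcases mul_eq_zero.1 this with h' | h'
              · exact Or.inr (Or.inr (Or.inl (by rw [Prod.mk.injEq]; exact ⟨rfl, by linarith⟩)))
              · exact Or.inr (Or.inr (Or.inr (Or.inl
                  (by rw [Prod.mk.injEq]; exact ⟨rfl, by linarith⟩))))
          · exfalso
            have : y^2 = 0 := by rw [hk', ← hxz]; ring
            have hy0 : y = 0 := by
              have := sq_eq_zero_iff.mp (by linarith : y^2 = 0); exact this
            rw [hy0, ← hxz] at hfx; norm_num at hfx
        · have hg : x^2+y^4-1 = 0 := by linear_combination hE - y^2*hh
          have hq : (5*y^2-(2*A-s))*(5*y^2-(2*A+s)) = 0 := by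
            linear_combination 5*hg - 5*(x+A-2*y^2)*hh - hs2
          rcases mul_eq_zero.1 hq with h | h
          · have hu : y^2 = u4 := by rw [hu4]; linarith
            have hxx : x = x4 := by rw [hx4]; linarith [hu, hh]
            subst hxx
            have : (y-y4)*(y+y4) = 0 := by linear_combination hu - hy4sq
            rcases mul_eq_zero.1 this with h' | h'
            · exact Or.inr (Or.inr (Or.inr (Or.inr (Or.inl
                (by rw [Prod.mk.injEq]; exact ⟨rfl, by linarith⟩)))))
            · exact Or.inr (Or.inr (Or.inr (Or.inr (Or.inr (Or.inl
                (by rw [Prod.mk.injEq]; exact ⟨rfl, by linarith⟩))))))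
          · have hu : y^2 = u5 := by rw [hu5]; linarith
            have hxx : x = x5 := by rw [hx5]; linarith [hu, hh]
            subst hxx
            have : (y-y5)*(y+y5) = 0 := by linear_combination hu - hy5sq
            rcases mul_eq_zero.1 this with h' | h'
            · exact Or.inr (Or.inr (Or.inr (Or.inr (Or.inr (Or.inr (Or.inl
                (by rw [Prod.mk.injEq]; exact ⟨rfl, by linarith⟩)))))))
            · exact Or.inr (Or.inr (Or.inr (Or.inr (Or.inr (Or.inr (Or.inr
                (by rw [Prod.mk.injEq]; exact ⟨rfl, by linarith⟩)))))))
    · have c3 : ∀ y0 : ℝ, y0^2 = 2*x3 →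
          (2*x3*(x3+2*y0^2-A) + (x3^2+y0^4-1) = 0 ∧
            y0*(y0^2*(x3+2*y0^2-A) + (x3^2+y0^4-1)) = 0) := by
        intro y0 h0
        constructor
        · linear_combination e3 + (6*x3+y0^2)*h0
        · linear_combination y0*e3 + y0*(7*x3+3*y0^2-A)*h0
      have c4 : ∀ y0 : ℝ, y0^2 = u4 →
          (2*x4*(x4+2*y0^2-A) + (x4^2+y0^4-1) = 0 ∧
            y0*(y0^2*(x4+2*y0^2-A) + (x4^2+y0^4-1)) = 0) := by
        intro y0 h0
        constructor
        · linear_combination 2*x4*hh4 + g4 + (4*x4+y0^2+u4)*h0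
        · linear_combination y0*u4*hh4 + y0*g4 + y0*(x4-A+3*y0^2+3*u4)*h0
      have c5 : ∀ y0 : ℝ, y0^2 = u5 →
          (2*x5*(x5+2*y0^2-A) + (x5^2+y0^4-1) = 0 ∧
            y0*(y0^2*(x5+2*y0^2-A) + (x5^2+y0^4-1)) = 0) := by
        intro y0 h0
        constructor
        · linear_combination 2*x5*hh5 + g5 + (4*x5+y0^2+u5)*h0
        · linear_combination y0*u5*hh5 + y0*g5 + y0*(x5-A+3*y0^2+3*u5)*h0
      have hy3sq' : (-y3)^2 = 2*x3 := by linear_combination hy3sq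
      have hy4sq' : (-y4)^2 = u4 := by linear_combination hy4sq
      have hy5sq' : (-y5)^2 = u5 := by linear_combination hy5sq
      rintro (h|h|h|h|h|h|h|h) <;> rw [Prod.mk.injEq] at h <;> rw [h.1, h.2]
      · exact ⟨by linear_combination e1, by norm_num⟩
      · exact ⟨by linear_combination e2, by norm_num⟩
      · exact c3 y3 hy3sq
      · exact c3 (-y3) hy3sq'
      · exact c4 y4 hy4sq
      · exact c4 (-y4) hy4sq'
      · exact c5 y5 hy5sq
      · exact c5 (-y5) hy5sq'
  -- ### negative-sign square facts
  have hy3n : (-y3)^2 = 2*x3 := by linear_combination hy3sq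
  have hy4n : (-y4)^2 = u4 := by linear_combination hy4sq
  have hy5n : (-y5)^2 = u5 := by linear_combination hy5sq
  -- ### the critical set as an explicit finite set
  have hsetEq : {p : ℝ × ℝ | IsCriticalPt (f12 A) p} =
      ({(x1,0),(x2,0),(x3,y3),(x3,-y3),(x4,y4),(x4,-y4),(x5,y5),(x5,-y5)} : Set (ℝ×ℝ)) := by
    ext q
    simp only [Set.mem_setOf_eq, Set.mem_insert_iff, Set.mem_singleton_iff]
    exact hcrit q
  have hfin0 : ({(x5,-y5)} : Set (ℝ×ℝ)).Finite := Set.finite_singleton _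
  have hfin1 : ({(x5,y5),(x5,-y5)} : Set (ℝ×ℝ)).Finite := hfin0.insert _
  have hfin2 : ({(x4,-y4),(x5,y5),(x5,-y5)} : Set (ℝ×ℝ)).Finite := hfin1.insert _
  have hfin3 : ({(x4,y4),(x4,-y4),(x5,y5),(x5,-y5)} : Set (ℝ×ℝ)).Finite := hfin2.insert _
  have hfin4 : ({(x3,-y3),(x4,y4),(x4,-y4),(x5,y5),(x5,-y5)} : Set (ℝ×ℝ)).Finite := hfin3.insert _
  have hfin5 : ({(x3,y3),(x3,-y3),(x4,y4),(x4,-y4),(x5,y5),(x5,-y5)} : Set (ℝ×ℝ)).Finite :=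
    hfin4.insert _
  have hfin6 : ({(x2,0),(x3,y3),(x3,-y3),(x4,y4),(x4,-y4),(x5,y5),(x5,-y5)} : Set (ℝ×ℝ)).Finite :=
    hfin5.insert _
  have hfin7 : ({(x1,0),(x2,0),(x3,y3),(x3,-y3),(x4,y4),(x4,-y4),(x5,y5),(x5,-y5)} :
      Set (ℝ×ℝ)).Finite := hfin6.insert _
  -- ### distinctness
  have hx45 : x4 ≠ x5 := by rw [hx4, hx5, hu4, hu5]; intro h; linarith
  have hx34 : ∀ a b : ℝ, a^2 = 2*x3 → b^2 = u4 → x3 = x4 → a = b → False := by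
    intro a b ha hb h1 h2
    rw [h2] at ha
    linarith [hy4sq, h2x4, hs0, hb, ha, h1]
  have hx35 : ∀ a b : ℝ, a^2 = 2*x3 → b^2 = u5 → x3 = x5 → a = b → False := by
    intro a b ha hb h1 h2
    rw [h2] at ha
    linarith [h2x5, hs0, hb, ha, h1]
  have hn1 : ((x1,(0:ℝ)):ℝ×ℝ) ∉
      ({(x2,0),(x3,y3),(x3,-y3),(x4,y4),(x4,-y4),(x5,y5),(x5,-y5)} : Set (ℝ×ℝ)) := by
    intro h
    simp only [Set.mem_insert_iff, Set.mem_singleton_iff, Prod.mk.injEq] at h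
    rcases h with ⟨h1,h2⟩|⟨h1,h2⟩|⟨h1,h2⟩|⟨h1,h2⟩|⟨h1,h2⟩|⟨h1,h2⟩|⟨h1,h2⟩
    · rw [hx1, hx2] at h1; linarith
    · linarith [hy3pos]
    · linarith [hy3pos]
    · linarith [hy4pos]
    · linarith [hy4pos]
    · linarith [hy5pos]
    · linarith [hy5pos]
  have hn2 : ((x2,(0:ℝ)):ℝ×ℝ) ∉
      ({(x3,y3),(x3,-y3),(x4,y4),(x4,-y4),(x5,y5),(x5,-y5)} : Set (ℝ×ℝ)) := by
    intro h
    simp only [Set.mem_insert_iff, Set.mem_singleton_iff, Prod.mk.injEq] at h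
    rcases h with ⟨h1,h2⟩|⟨h1,h2⟩|⟨h1,h2⟩|⟨h1,h2⟩|⟨h1,h2⟩|⟨h1,h2⟩
    · linarith [hy3pos]
    · linarith [hy3pos]
    · linarith [hy4pos]
    · linarith [hy4pos]
    · linarith [hy5pos]
    · linarith [hy5pos]
  have hn3 : ((x3,y3):ℝ×ℝ) ∉
      ({(x3,-y3),(x4,y4),(x4,-y4),(x5,y5),(x5,-y5)} : Set (ℝ×ℝ)) := by
    intro h
    simp only [Set.mem_insert_iff, Set.mem_singleton_iff, Prod.mk.injEq] at h
    rcases h with ⟨h1,h2⟩|⟨h1,h2⟩|⟨h1,h2⟩|⟨h1,h2⟩|⟨h1,h2⟩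
    · linarith [hy3pos]
    · exact hx34 y3 y4 hy3sq hy4sq h1 h2
    · exact hx34 y3 (-y4) hy3sq hy4n h1 h2
    · exact hx35 y3 y5 hy3sq hy5sq h1 h2
    · exact hx35 y3 (-y5) hy3sq hy5n h1 h2
  have hn4 : ((x3,-y3):ℝ×ℝ) ∉ ({(x4,y4),(x4,-y4),(x5,y5),(x5,-y5)} : Set (ℝ×ℝ)) := by
    intro h
    simp only [Set.mem_insert_iff, Set.mem_singleton_iff, Prod.mk.injEq] at h
    rcases h with ⟨h1,h2⟩|⟨h1,h2⟩|⟨h1,h2⟩|⟨h1,h2⟩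
    · exact hx34 (-y3) y4 hy3n hy4sq h1 h2
    · exact hx34 (-y3) (-y4) hy3n hy4n h1 h2
    · exact hx35 (-y3) y5 hy3n hy5sq h1 h2
    · exact hx35 (-y3) (-y5) hy3n hy5n h1 h2
  have hn5 : ((x4,y4):ℝ×ℝ) ∉ ({(x4,-y4),(x5,y5),(x5,-y5)} : Set (ℝ×ℝ)) := by
    intro h
    simp only [Set.mem_insert_iff, Set.mem_singleton_iff, Prod.mk.injEq] at h
    rcases h with ⟨h1,h2⟩|⟨h1,h2⟩|⟨h1,h2⟩
    · linarith [hy4pos]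
    · exact hx45 h1
    · exact hx45 h1
  have hn6 : ((x4,-y4):ℝ×ℝ) ∉ ({(x5,y5),(x5,-y5)} : Set (ℝ×ℝ)) := by
    intro h
    simp only [Set.mem_insert_iff, Set.mem_singleton_iff, Prod.mk.injEq] at h
    rcases h with ⟨h1,h2⟩|⟨h1,h2⟩
    · exact hx45 h1
    · exact hx45 h1
  have hn7 : ((x5,y5):ℝ×ℝ) ∉ ({(x5,-y5)} : Set (ℝ×ℝ)) := by
    intro h
    simp only [Set.mem_singleton_iff, Prod.mk.injEq] at h
    linarith [hy5pos, h.2]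
  have hcard8 : ({(x1,0),(x2,0),(x3,y3),(x3,-y3),(x4,y4),(x4,-y4),(x5,y5),(x5,-y5)} :
      Set (ℝ×ℝ)).ncard = 8 := by
    rw [Set.ncard_insert_of_notMem hn1 hfin6, Set.ncard_insert_of_notMem hn2 hfin5,
      Set.ncard_insert_of_notMem hn3 hfin4, Set.ncard_insert_of_notMem hn4 hfin3,
      Set.ncard_insert_of_notMem hn5 hfin2, Set.ncard_insert_of_notMem hn6 hfin1,
      Set.ncard_insert_of_notMem hn7 hfin0, Set.ncard_singleton]
  have hA22 : A < 2 := aux_sqlt (by norm_num) (by linarith [hA2']) hA0.le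
  have hyne : ∀ (y0 c : ℝ), 0 < c → y0^2 = c → y0 ≠ 0 := by
    intro y0 c hc h0 h
    rw [h] at h0
    norm_num at h0
    linarith
  have notmin1 : ¬ IsLocMin (f12 A) (x1,0) := notmin_axis1 A x1 r e1 (by rw [hx1]; ring) hr0
  have notmax2 : ¬ IsLocMax (f12 A) (x2,0) := notmax_axis2 A x2 r e2 (by rw [hx2]; ring) hr0
  have notmax3 : ∀ y0:ℝ, y0^2 = 2*x3 → ¬ IsLocMax (f12 A) (x3,y0) := fun y0 h0 =>
    notmax_p3 A x3 y0 h0 e3 h7x3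
  have notmax4 : ∀ y0:ℝ, y0^2 = u4 → ¬ IsLocMax (f12 A) (x4,y0) := fun y0 h0 =>
    notmax_vert A x4 y0 (hg4' y0 h0) (hh4' y0 h0) (hyne y0 u4 hu4pos h0)
  have notmin4 : ∀ y0:ℝ, y0^2 = u4 → ¬ IsLocMin (f12 A) (x4,y0) := fun y0 h0 =>
    notmin_diag A x4 y0 u4 s h0 (hg4' y0 h0) hh4 h2x4 hs0 hx4pos hu4pos
  have notmax5 : ∀ y0:ℝ, y0^2 = u5 → ¬ IsLocMax (f12 A) (x5,y0) := fun y0 h0 =>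
    notmax_vert A x5 y0 (hg5' y0 h0) (hh5' y0 h0) (hyne y0 u5 hu5pos h0)
  have notmin5 : ∀ y0:ℝ, y0^2 = u5 → ¬ IsLocMin (f12 A) (x5,y0) := fun y0 h0 =>
    notmin_horiz A x5 y0 (hg5' y0 h0) (hh5' y0 h0) hx5neg
  have hv1pos : 0 < f12 A x1 0 := by
    rw [val_axis]; exact mul_pos_of_neg_of_neg hg1 hh1
  have hv2neg : f12 A x2 0 < 0 := by
    rw [val_axis]; exact mul_neg_of_pos_of_neg hg2 hh2
  have hv3neg : (5*x3^2-1)*(5*x3-A) < 0 := mul_neg_of_neg_of_pos hg3 hh3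
  -- ### local max at (x1,0) via a compact region
  have max1 : IsLocMax (f12 A) (x1, 0) := by
    have hKsub : {q : ℝ×ℝ | q.1^2+q.2^4-1 ≤ 0 ∧ q.1+2*q.2^2-A ≤ 0} ⊆
        Set.Icc (-1:ℝ) 1 ×ˢ Set.Icc (-1:ℝ) 1 := by
      rintro ⟨qx,qy⟩ ⟨h1,h2⟩
      obtain ⟨b1,b2,b3,b4⟩ := aux_quart h1
      exact ⟨⟨b1,b2⟩,⟨b3,b4⟩⟩
    have hKcl : IsClosed {q : ℝ×ℝ | q.1^2+q.2^4-1 ≤ 0 ∧ q.1+2*q.2^2-A ≤ 0} := by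
      rw [Set.setOf_and]
      exact (isClosed_le (by fun_prop) continuous_const).inter
        (isClosed_le (by fun_prop) continuous_const)
    have hKc : IsCompact {q : ℝ×ℝ | q.1^2+q.2^4-1 ≤ 0 ∧ q.1+2*q.2^2-A ≤ 0} :=
      IsCompact.of_isClosed_subset (isCompact_Icc.prod isCompact_Icc) hKcl hKsub
    have hP1K : ((x1,(0:ℝ)):ℝ×ℝ) ∈ {q : ℝ×ℝ | q.1^2+q.2^4-1 ≤ 0 ∧ q.1+2*q.2^2-A ≤ 0} := by
      constructor
      · show x1^2+(0:ℝ)^4-1 ≤ 0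
        ring_nf
        linarith
      · show x1+2*(0:ℝ)^2-A ≤ 0
        ring_nf
        linarith
    obtain ⟨q, hqK, hqmax⟩ := hKc.exists_isMaxOn ⟨_, hP1K⟩ (cont_f12 A).continuousOn
    have hfq : 0 < f12 A q.1 q.2 := lt_of_lt_of_le hv1pos (hqmax hP1K)
    have hgq : q.1^2+q.2^4-1 < 0 := by
      rcases lt_or_eq_of_le hqK.1 with h|h
      · exact h
      · exfalso; have := val_zero A q.1 q.2 h; linarith
    have hhq : q.1+2*q.2^2-A < 0 := by
      rcases lt_or_eq_of_le hqK.2 with h|h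
      · exact h
      · exfalso
        have hz : f12 A q.1 q.2 = 0 := by
          simp only [f12]; linear_combination (q.1^2+q.2^4-1) * h
        linarith
    have hWo : IsOpen {p : ℝ×ℝ | p.1^2+p.2^4-1 < 0 ∧ p.1+2*p.2^2-A < 0} := by
      rw [Set.setOf_and]
      exact (isOpen_lt (by fun_prop) continuous_const).inter
        (isOpen_lt (by fun_prop) continuous_const)
    have hlocq : IsLocMax (f12 A) q :=
      locMax_of_maxOn hWo ⟨hgq, hhq⟩ (fun z hz => hqmax ⟨le_of_lt hz.1, le_of_lt hz.2⟩)
    have hqc := crit_of_locMax hlocq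
    rcases (hcrit q).1 hqc with rfl|rfl|rfl|rfl|rfl|rfl|rfl|rfl
    · exact hlocq
    · exfalso; have h' : x2^2+(0:ℝ)^4-1 < 0 := hgq; linarith
    · exfalso; have h' : x3+2*y3^2-A < 0 := hhq; linarith [hy3sq, hh3]
    · exfalso; have h' : x3+2*(-y3)^2-A < 0 := hhq; linarith [hy3n, hh3]
    · exfalso; have h' : x4^2+y4^4-1 < 0 := hgq; linarith [hg4' y4 hy4sq]
    · exfalso; have h' : x4^2+(-y4)^4-1 < 0 := hgq; linarith [hg4' (-y4) hy4n]
    · exfalso; have h' : x5^2+y5^4-1 < 0 := hgq; linarith [hg5' y5 hy5sq]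
    · exfalso; have h' : x5^2+(-y5)^4-1 < 0 := hgq; linarith [hg5' (-y5) hy5n]
  -- ### local min at (x2,0)
  have min2 : IsLocMin (f12 A) (x2, 0) := by
    have hKsub : {q : ℝ×ℝ | 0 ≤ q.1^2+q.2^4-1 ∧ q.1+2*q.2^2-A ≤ 0 ∧ 0 ≤ q.1} ⊆
        Set.Icc (0:ℝ) 2 ×ˢ Set.Icc (-1:ℝ) 1 := by
      rintro ⟨qx,qy⟩ ⟨h1,h2,h3⟩
      obtain ⟨b1,b2⟩ := aux_par_bound hA2' hA0 (by dsimp only at h2 h3; linarith [sq_nonneg qy])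
      exact ⟨⟨h3, by dsimp only at h2 h3 ⊢; linarith [sq_nonneg qy]⟩, ⟨b1, b2⟩⟩
    have hKcl : IsClosed {q : ℝ×ℝ | 0 ≤ q.1^2+q.2^4-1 ∧ q.1+2*q.2^2-A ≤ 0 ∧ 0 ≤ q.1} := by
      rw [Set.setOf_and, Set.setOf_and]
      exact (isClosed_le continuous_const (by fun_prop)).inter
        ((isClosed_le (by fun_prop) continuous_const).inter
          (isClosed_le continuous_const (by fun_prop)))
    have hKc : IsCompact {q : ℝ×ℝ | 0 ≤ q.1^2+q.2^4-1 ∧ q.1+2*q.2^2-A ≤ 0 ∧ 0 ≤ q.1} :=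
      IsCompact.of_isClosed_subset (isCompact_Icc.prod isCompact_Icc) hKcl hKsub
    have hP2K : ((x2,(0:ℝ)):ℝ×ℝ) ∈
        {q : ℝ×ℝ | 0 ≤ q.1^2+q.2^4-1 ∧ q.1+2*q.2^2-A ≤ 0 ∧ 0 ≤ q.1} := by
      refine ⟨?_, ?_, ?_⟩
      · show (0:ℝ) ≤ x2^2+(0:ℝ)^4-1
        ring_nf
        linarith
      · show x2+2*(0:ℝ)^2-A ≤ 0
        ring_nf
        linarith
      · show (0:ℝ) ≤ x2
        linarith
    obtain ⟨q, hqK, hqmin⟩ := hKc.exists_isMinOn ⟨_, hP2K⟩ (cont_f12 A).continuousOn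
    have hfq : f12 A q.1 q.2 < 0 := lt_of_le_of_lt (hqmin hP2K) hv2neg
    have hgq : 0 < q.1^2+q.2^4-1 := by
      rcases lt_or_eq_of_le hqK.1 with h|h
      · exact h
      · exfalso; have := val_zero A q.1 q.2 h.symm; linarith
    have hhq : q.1+2*q.2^2-A < 0 := by
      rcases lt_or_eq_of_le hqK.2.1 with h|h
      · exact h
      · exfalso
        have hz : f12 A q.1 q.2 = 0 := by
          simp only [f12]; linear_combination (q.1^2+q.2^4-1) * h
        linarith
    have hxq : 0 < q.1 := by
      rcases lt_or_eq_of_le hqK.2.2 with h|h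
      · exact h
      · exfalso
        obtain ⟨hq1, hq2, -⟩ := hqK
        rw [← h] at hq1 hq2
        exact aux_x0_contra hA2' hA0 hq1 hq2
    have hWo : IsOpen {p : ℝ×ℝ | 0 < p.1^2+p.2^4-1 ∧ p.1+2*p.2^2-A < 0 ∧ 0 < p.1} := by
      rw [Set.setOf_and, Set.setOf_and]
      exact (isOpen_lt continuous_const (by fun_prop)).inter
        ((isOpen_lt (by fun_prop) continuous_const).inter
          (isOpen_lt continuous_const (by fun_prop)))
    have hlocq : IsLocMin (f12 A) q :=
      locMin_of_minOn hWo ⟨hgq, hhq, hxq⟩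
        (fun z hz => hqmin ⟨le_of_lt hz.1, le_of_lt hz.2.1, le_of_lt hz.2.2⟩)
    have hqc := crit_of_locMin hlocq
    rcases (hcrit q).1 hqc with rfl|rfl|rfl|rfl|rfl|rfl|rfl|rfl
    · exfalso; have h' : (0:ℝ) < x1 := hxq; linarith
    · exact hlocq
    · exfalso; have h' : x3+2*y3^2-A < 0 := hhq; linarith [hy3sq, hh3]
    · exfalso; have h' : x3+2*(-y3)^2-A < 0 := hhq; linarith [hy3n, hh3]
    · exfalso; have h' : (0:ℝ) < x4^2+y4^4-1 := hgq; linarith [hg4' y4 hy4sq]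
    · exfalso; have h' : (0:ℝ) < x4^2+(-y4)^4-1 := hgq; linarith [hg4' (-y4) hy4n]
    · exfalso; have h' : (0:ℝ) < x5^2+y5^4-1 := hgq; linarith [hg5' y5 hy5sq]
    · exfalso; have h' : (0:ℝ) < x5^2+(-y5)^4-1 := hgq; linarith [hg5' (-y5) hy5n]
  -- ### local minima at (x3, ±y3)
  have min3 : ∀ y0:ℝ, y0^2 = 2*x3 → IsLocMin (f12 A) (x3, y0) := by
    have hKsub : {q : ℝ×ℝ | q.1^2+q.2^4-1 ≤ 0 ∧ 0 ≤ q.1+2*q.2^2-A} ⊆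
        Set.Icc (-1:ℝ) 1 ×ˢ Set.Icc (-1:ℝ) 1 := by
      rintro ⟨qx,qy⟩ ⟨h1,h2⟩
      obtain ⟨b1,b2,b3,b4⟩ := aux_quart h1
      exact ⟨⟨b1,b2⟩,⟨b3,b4⟩⟩
    have hKcl : IsClosed {q : ℝ×ℝ | q.1^2+q.2^4-1 ≤ 0 ∧ 0 ≤ q.1+2*q.2^2-A} := by
      rw [Set.setOf_and]
      exact (isClosed_le (by fun_prop) continuous_const).inter
        (isClosed_le continuous_const (by fun_prop))
    have hKc : IsCompact {q : ℝ×ℝ | q.1^2+q.2^4-1 ≤ 0 ∧ 0 ≤ q.1+2*q.2^2-A} :=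
      IsCompact.of_isClosed_subset (isCompact_Icc.prod isCompact_Icc) hKcl hKsub
    have hP3K : ((x3,y3):ℝ×ℝ) ∈ {q : ℝ×ℝ | q.1^2+q.2^4-1 ≤ 0 ∧ 0 ≤ q.1+2*q.2^2-A} :=
      ⟨by show x3^2+y3^4-1 ≤ 0; linarith [hg3' y3 hy3sq],
        by show (0:ℝ) ≤ x3+2*y3^2-A; linarith [hy3sq, hh3]⟩
    obtain ⟨q, hqK, hqmin⟩ := hKc.exists_isMinOn ⟨_, hP3K⟩ (cont_f12 A).continuousOn
    have hfq : f12 A q.1 q.2 < 0 := by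
      have h1 : f12 A q.1 q.2 ≤ f12 A x3 y3 := hqmin hP3K
      have h2 : f12 A x3 y3 = (5*x3^2-1)*(5*x3-A) := val_p3 A x3 y3 hy3sq
      rw [h2] at h1
      linarith
    have hgq : q.1^2+q.2^4-1 < 0 := by
      rcases lt_or_eq_of_le hqK.1 with h|h
      · exact h
      · exfalso; have := val_zero A q.1 q.2 h; linarith
    have hhq : 0 < q.1+2*q.2^2-A := by
      rcases lt_or_eq_of_le hqK.2 with h|h
      · exact h
      · exfalso
        have hz : f12 A q.1 q.2 = 0 := by
          simp only [f12]; linear_combination (q.1^2+q.2^4-1) * h.symm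
        linarith
    have hWo : IsOpen {p : ℝ×ℝ | p.1^2+p.2^4-1 < 0 ∧ 0 < p.1+2*p.2^2-A} := by
      rw [Set.setOf_and]
      exact (isOpen_lt (by fun_prop) continuous_const).inter
        (isOpen_lt continuous_const (by fun_prop))
    have hqc : IsCriticalPt (f12 A) q := crit_of_locMin
      (locMin_of_minOn hWo ⟨hgq, hhq⟩ (fun z hz => hqmin ⟨le_of_lt hz.1, le_of_lt hz.2⟩))
    have hq3 : f12 A q.1 q.2 = (5*x3^2-1)*(5*x3-A) := by
      rcases (hcrit q).1 hqc with rfl|rfl|rfl|rfl|rfl|rfl|rfl|rfl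
      · exfalso; have h' : (0:ℝ) < x1+2*(0:ℝ)^2-A := hhq; linarith
      · exfalso; have h' : x2^2+(0:ℝ)^4-1 < 0 := hgq; linarith
      · exact val_p3 A x3 y3 hy3sq
      · exact val_p3 A x3 (-y3) hy3n
      · exfalso; have h' : x4^2+y4^4-1 < 0 := hgq; linarith [hg4' y4 hy4sq]
      · exfalso; have h' : x4^2+(-y4)^4-1 < 0 := hgq; linarith [hg4' (-y4) hy4n]
      · exfalso; have h' : x5^2+y5^4-1 < 0 := hgq; linarith [hg5' y5 hy5sq]
      · exfalso; have h' : x5^2+(-y5)^4-1 < 0 := hgq; linarith [hg5' (-y5) hy5n]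
    intro y0 h0
    have m1 : x3^2+y0^4-1 < 0 := by linarith [hg3' y0 h0]
    have m2 : 0 < x3+2*y0^2-A := by linarith [h0, hh3]
    refine locMin_of_minOn hWo ⟨m1, m2⟩ ?_
    intro z hz
    have h1 : f12 A q.1 q.2 ≤ f12 A z.1 z.2 := hqmin ⟨le_of_lt hz.1, le_of_lt hz.2⟩
    rw [hq3] at h1
    show f12 A x3 y0 ≤ f12 A z.1 z.2
    rw [val_p3 A x3 y0 h0]
    exact h1
  -- ### final assembly
  refine ⟨?_, ?_, ?_, ?_, ?_, ?_⟩
  · -- nondegeneracy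
    intro p hp
    rcases (hcrit p).1 hp with rfl|rfl|rfl|rfl|rfl|rfl|rfl|rfl
    · exact hess_axis A x1 e1 (ne_of_lt hg1)
    · exact hess_axis A x2 e2 (ne_of_gt hg2)
    · exact hess_p3 A x3 y3 hy3sq e3 hg3 hx3pos
    · exact hess_p3 A x3 (-y3) hy3n e3 hg3 hx3pos
    · exact hess_p45 A x4 u4 s y4 hy4sq hh4 g4 (Or.inl h2x4) hu4pos hs0
    · exact hess_p45 A x4 u4 s (-y4) hy4n hh4 g4 (Or.inl h2x4) hu4pos hs0
    · exact hess_p45 A x5 u5 s y5 hy5sq hh5 g5 (Or.inr h2x5) hu5pos hs0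
    · exact hess_p45 A x5 u5 s (-y5) hy5n hh5 g5 (Or.inr h2x5) hu5pos hs0
  · rw [hsetEq]; exact hfin7
  · rw [hsetEq]; exact hcard8
  · -- exactly three local minima
    have hminEq : {p : ℝ×ℝ | IsCriticalPt (f12 A) p ∧ IsLocMin (f12 A) p} =
        ({(x2,0),(x3,y3),(x3,-y3)} : Set (ℝ×ℝ)) := by
      ext q
      simp only [Set.mem_setOf_eq, Set.mem_insert_iff, Set.mem_singleton_iff]
      constructor
      · rintro ⟨hc, hmin⟩
        rcases (hcrit q).1 hc with rfl|rfl|rfl|rfl|rfl|rfl|rfl|rfl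
        · exact absurd hmin notmin1
        · exact Or.inl rfl
        · exact Or.inr (Or.inl rfl)
        · exact Or.inr (Or.inr rfl)
        · exact absurd hmin (notmin4 y4 hy4sq)
        · exact absurd hmin (notmin4 (-y4) hy4n)
        · exact absurd hmin (notmin5 y5 hy5sq)
        · exact absurd hmin (notmin5 (-y5) hy5n)
      · rintro (rfl|rfl|rfl)
        · exact ⟨(hcrit _).2 (Or.inr (Or.inl rfl)), min2⟩
        · exact ⟨(hcrit _).2 (Or.inr (Or.inr (Or.inl rfl))), min3 y3 hy3sq⟩
        · exact ⟨(hcrit _).2 (Or.inr (Or.inr (Or.inr (Or.inl rfl)))), min3 (-y3) hy3n⟩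
    rw [hminEq]
    have hf1 : ({((x3,-y3):ℝ×ℝ)} : Set (ℝ×ℝ)).Finite := Set.finite_singleton _
    have hf2 : ({(x3,y3),(x3,-y3)} : Set (ℝ×ℝ)).Finite := hf1.insert _
    have hm1 : ((x2,(0:ℝ)):ℝ×ℝ) ∉ ({(x3,y3),(x3,-y3)} : Set (ℝ×ℝ)) := by
      intro h
      simp only [Set.mem_insert_iff, Set.mem_singleton_iff, Prod.mk.injEq] at h
      rcases h with ⟨h1,h2⟩|⟨h1,h2⟩ <;> linarith [hy3pos]
    have hm2 : ((x3,y3):ℝ×ℝ) ∉ ({((x3,-y3):ℝ×ℝ)} : Set (ℝ×ℝ)) := by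
      intro h
      simp only [Set.mem_singleton_iff, Prod.mk.injEq] at h
      linarith [hy3pos, h.2]
    rw [Set.ncard_insert_of_notMem hm1 hf2, Set.ncard_insert_of_notMem hm2 hf1,
      Set.ncard_singleton]
  · -- exactly four saddles
    have hsadEq : {p : ℝ×ℝ | IsSaddle (f12 A) p} =
        ({(x4,y4),(x4,-y4),(x5,y5),(x5,-y5)} : Set (ℝ×ℝ)) := by
      ext q
      simp only [Set.mem_setOf_eq, Set.mem_insert_iff, Set.mem_singleton_iff, IsSaddle]
      constructor
      · rintro ⟨hc, hnmin, hnmax⟩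
        rcases (hcrit q).1 hc with rfl|rfl|rfl|rfl|rfl|rfl|rfl|rfl
        · exact absurd max1 hnmax
        · exact absurd min2 hnmin
        · exact absurd (min3 y3 hy3sq) hnmin
        · exact absurd (min3 (-y3) hy3n) hnmin
        · exact Or.inl rfl
        · exact Or.inr (Or.inl rfl)
        · exact Or.inr (Or.inr (Or.inl rfl))
        · exact Or.inr (Or.inr (Or.inr rfl))
      · rintro (rfl|rfl|rfl|rfl)
        · exact ⟨(hcrit _).2 (Or.inr (Or.inr (Or.inr (Or.inr (Or.inl rfl))))),
            notmin4 y4 hy4sq, notmax4 y4 hy4sq⟩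
        · exact ⟨(hcrit _).2 (Or.inr (Or.inr (Or.inr (Or.inr (Or.inr (Or.inl rfl)))))),
            notmin4 (-y4) hy4n, notmax4 (-y4) hy4n⟩
        · exact ⟨(hcrit _).2 (Or.inr (Or.inr (Or.inr (Or.inr (Or.inr (Or.inr (Or.inl rfl))))))),
            notmin5 y5 hy5sq, notmax5 y5 hy5sq⟩
        · exact ⟨(hcrit _).2 (Or.inr (Or.inr (Or.inr (Or.inr (Or.inr (Or.inr (Or.inr rfl))))))),
            notmin5 (-y5) hy5n, notmax5 (-y5) hy5n⟩
    rw [hsadEq]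
    rw [Set.ncard_insert_of_notMem hn5 hfin2, Set.ncard_insert_of_notMem hn6 hfin1,
      Set.ncard_insert_of_notMem hn7 hfin0, Set.ncard_singleton]
  · -- exactly one local maximum
    have hmaxEq : {p : ℝ×ℝ | IsCriticalPt (f12 A) p ∧ IsLocMax (f12 A) p} =
        ({((x1,(0:ℝ)):ℝ×ℝ)} : Set (ℝ×ℝ)) := by
      ext q
      simp only [Set.mem_setOf_eq, Set.mem_singleton_iff]
      constructor
      · rintro ⟨hc, hmax⟩
        rcases (hcrit q).1 hc with rfl|rfl|rfl|rfl|rfl|rfl|rfl|rfl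
        · rfl
        · exact absurd hmax notmax2
        · exact absurd hmax (notmax3 y3 hy3sq)
        · exact absurd hmax (notmax3 (-y3) hy3n)
        · exact absurd hmax (notmax4 y4 hy4sq)
        · exact absurd hmax (notmax4 (-y4) hy4n)
        · exact absurd hmax (notmax5 y5 hy5sq)
        · exact absurd hmax (notmax5 (-y5) hy5n)
      · rintro rfl
        exact ⟨(hcrit _).2 (Or.inl rfl), max1⟩
    rw [hmaxEq, Set.ncard_singleton]
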